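/- Let d ∈ V, let λ ∈ F satisfy λ² + λ + 1 = 0, let V' = {x ∈ V : Tr(ϑ_d(x)) = 1}, and let A = {a ∈ V' : ϑ_d(a) = λ}. Then for all distinct a, b ∈ V': ϑ_d(a + b) = ⟨a,b⟩² holds if and only if the statements 'Tr(⟨a,b⟩) = 0' and 'a ∈ A ⟺ b ∈ A' are equivalent. (That is, the graph NO^∓(2m+1,4), with vertex set V' and edges given by ϑ_d(a+b) = ⟨a,b⟩², is obtained from the graph NO^±(4m,2), with the same vertex set and edges given by Tr(⟨a,b⟩) = 0, by Seidel switching with respect to the set A; in particular these two strongly regular graphs are switching equivalent.) -/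
import Mathlib


open Finset

noncomputable section

/-- The symplectic bilinear form `⟨u,v⟩ = ∑_{i<m} (u_i v_{m+i} + u_{m+i} v_i)` on `F^{2m}`,
`F = GF(4)`. -/
def symp (m : ℕ) (u v : Fin (2*m) → GaloisField 2 2) : GaloisField 2 2 :=
  ∑ i : Fin m, (u ⟨i.1, by omega⟩ * v ⟨m + i.1, by omega⟩ +
    u ⟨m + i.1, by omega⟩ * v ⟨i.1, by omega⟩)

/-- The quadratic form `ϑ_0(u) = ∑_{i<m} u_i u_{m+i}`. -/
def th0 (m : ℕ) (u : Fin (2*m) → GaloisField 2 2) : GaloisField 2 2 :=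
  ∑ i : Fin m, u ⟨i.1, by omega⟩ * u ⟨m + i.1, by omega⟩

/-- The quadratic form `ϑ_a(u) = ϑ_0(u) + ⟨a,u⟩²`. -/
def th (m : ℕ) (a u : Fin (2*m) → GaloisField 2 2) : GaloisField 2 2 :=
  th0 m u + (symp m a u)^2

/-- The absolute trace of `GF(4)`, `Tr(x) = x + x²`. -/
def tr4 (x : GaloisField 2 2) : GaloisField 2 2 := x + x^2

end


lemma gf4_two : (2 : GaloisField 2 2) = 0 := by
  exact_mod_cast CharP.cast_eq_zero (GaloisField 2 2) 2

lemma gf4_pow4 (x : GaloisField 2 2) : x^4 = x := by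
  haveI : Fintype (GaloisField 2 2) := Fintype.ofFinite _
  have h := FiniteField.pow_card x
  have hc : Fintype.card (GaloisField 2 2) = 4 := by
    have := GaloisField.card 2 2 (by norm_num)
    simpa [Nat.card_eq_fintype_card] using this
  rwa [hc] at h

lemma tr4_cases (x : GaloisField 2 2) : tr4 x = 0 ∨ tr4 x = 1 := by
  have h : tr4 x * (tr4 x - 1) = 0 := by
    have h4 := gf4_pow4 x
    unfold tr4
    linear_combination h4 + x^3 * gf4_two
  rcases mul_eq_zero.1 h with h | h
  · exact Or.inl h
  · exact Or.inr (sub_eq_zero.1 h)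

lemma symp_add_right (m : ℕ) (d a b : Fin (2*m) → GaloisField 2 2) :
    symp m d (a + b) = symp m d a + symp m d b := by
  unfold symp
  rw [← Finset.sum_add_distrib]
  exact Finset.sum_congr rfl fun i _ => by simp [Pi.add_apply]; ring

lemma th_add (m : ℕ) (d a b : Fin (2*m) → GaloisField 2 2) :
    th m d (a + b) = th m d a + th m d b + symp m a b := by
  unfold th
  have h0 : th0 m (a + b) = th0 m a + th0 m b + symp m a b := by
    unfold th0 symp
    rw [← Finset.sum_add_distrib, ← Finset.sum_add_distrib]
    exact Finset.sum_congr rfl fun i _ => by simp [Pi.add_apply]; ring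
  rw [h0, symp_add_right]
  have h1 : (symp m d a + symp m d b)^2 = (symp m d a)^2 + (symp m d b)^2 := by
    linear_combination (symp m d a * symp m d b) * gf4_two
  rw [h1]; ring

/-- `NO^∓(2m+1,4)` (edges `ϑ_d(a+b) = ⟨a,b⟩²`) is obtained from `NO^±(4m,2)` (edges
`Tr⟨a,b⟩ = 0`) on the common vertex set `{x : Tr(ϑ_d(x)) = 1}` by Seidel switching w.r.t.
`A = {a : ϑ_d(a) = λ}`, `λ` a primitive cube root of unity: for distinct vertices `a, b`,
`ϑ_d(a+b) = ⟨a,b⟩²` iff (`Tr⟨a,b⟩ = 0` ⟺ (`a ∈ A` ⟺ `b ∈ A`)). -/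
theorem stmt_14 (m : ℕ) (hm : 1 ≤ m) (d : Fin (2*m) → GaloisField 2 2)
    (lam : GaloisField 2 2) (hlam : lam^2 + lam + 1 = 0)
    (a b : Fin (2*m) → GaloisField 2 2)
    (ha : tr4 (th m d a) = 1) (hb : tr4 (th m d b) = 1) (hab : a ≠ b) :
    (th m d (a + b) = (symp m a b)^2)
    ↔ ((tr4 (symp m a b) = 0) ↔ (th m d a = lam ↔ th m d b = lam)) := by
  set α := th m d a with hα
  set β := th m d b with hβ
  set s := symp m a b with hs
  have key : th m d (a + b) = α + β + s := th_add m d a b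
  rw [key]
  have hone : (1 : GaloisField 2 2) ≠ 0 := one_ne_zero
  have hlamne : lam^2 ≠ lam := fun h =>
    hone (by linear_combination hlam - h - lam * gf4_two)
  have trone : ∀ x : GaloisField 2 2, tr4 x = 1 → x = lam ∨ x = lam^2 := by
    intro x hx
    have hl3 : lam^3 = 1 := by linear_combination (lam - 1) * hlam
    have h : (x - lam) * (x - lam^2) = 0 := by
      unfold tr4 at hx
      linear_combination hx + hl3 - x * hlam + gf4_two
    rcases mul_eq_zero.1 h with h | h
    · exact Or.inl (sub_eq_zero.1 h)
    · exact Or.inr (sub_eq_zero.1 h)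
  rcases trone _ ha with h1 | h1 <;> rcases trone _ hb with h2 | h2 <;>
    rcases tr4_cases s with h3 | h3 <;> rw [h1, h2, h3] <;> unfold tr4 at h3
  · refine iff_of_true (by linear_combination h3 + (lam - s^2) * gf4_two) (by simp)
  · refine iff_of_false (fun h => hone (by linear_combination h - h3 + (s^2 - lam) * gf4_two))
      (fun h => hone (h.2 Iff.rfl))
  · refine iff_of_false
      (fun h => hone (by linear_combination hlam - h + h3 - s^2 * gf4_two))
      (fun h => hlamne ((h.1 rfl).1 rfl))
  · refine iff_of_true (by linear_combination hlam + h3 - s^2 * gf4_two)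
      ⟨fun h => absurd h hone, fun h => absurd (h.1 rfl) hlamne⟩
  · refine iff_of_false
      (fun h => hone (by linear_combination hlam - h + h3 - s^2 * gf4_two))
      (fun h => hlamne ((h.1 rfl).2 rfl))
  · refine iff_of_true (by linear_combination hlam + h3 - s^2 * gf4_two)
      ⟨fun h => absurd h hone, fun h => absurd (h.2 rfl) hlamne⟩
  · refine iff_of_true (by linear_combination h3 + (lam^2 - s^2) * gf4_two) (by simp)
  · refine iff_of_false
      (fun h => hone (by linear_combination h - h3 + (s^2 - lam^2) * gf4_two))
      (fun h => hone (h.2 Iff.rfl))
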